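/- arXiv:1210.8052 — 2 statements merged into one kernel-verified Lean document; each statement's English description precedes it below -/
import Mathlib

section
/- Let A be an algebra over a commutative ring k, and let M be a right comodule over the Sweedler coring A⊗A, with coaction ρ(m) = m_{[0]} ⊗ m_{[1]} ∈ M ⊗ A satisfying the counit axiom m_{[0]} m_{[1]} = m, the coassociativity axiom ρ(m_{[0]}) ⊗ m_{[1]} = m_{[0]} ⊗ 1 ⊗ m_{[1]}, and right A-linearity ρ(ma) = m_{[0]} ⊗ m_{[1]} a. Then the formula a · m := m_{[0]} a m_{[1]} defines a left A-module structure on M. -/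
/-!
Since `(m a) ⊗ c` and `m ⊗ a c` have the same image under the action map, `a · m` is also
`m₍₀₎ (a m₍₁₎)`. Right linearity and coassociativity of `ρ` then give
`ρ (b · m) = m₍₀₎ ⊗ b m₍₁₎`: `ρ` intertwines the new left action with left multiplication on
the tensor factor `A`. From this, `(a b) · m = a · (b · m)` is immediate, and `1 · m = m` is
the counit axiom.
-/

open TensorProduct

/-- A right comodule over the Sweedler canonical coring `A ⊗ A` of a `k`-algebra `A`:
a right `A`-module `M` (action `act`) with a `k`-linear coaction `rho : M → M ⊗ A`
satisfying the counit, coassociativity and right `A`-linearity axioms. -/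
structure SweedlerComodule (k A M : Type*) [CommRing k] [Ring A] [Algebra k A]
    [AddCommGroup M] [Module k M] where
  act : M →ₗ[k] A →ₗ[k] M
  act_one : ∀ m : M, act m 1 = m
  act_mul : ∀ (m : M) (a b : A), act (act m a) b = act m (a * b)
  rho : M →ₗ[k] M ⊗[k] A
  counit : ∀ m : M, TensorProduct.lift act (rho m) = m
  coassoc : ∀ m : M,
    (TensorProduct.assoc k M A A) ((TensorProduct.map rho LinearMap.id) (rho m)) =
      (TensorProduct.map LinearMap.id (TensorProduct.mk k A A 1)) (rho m)
  rho_act : ∀ (m : M) (a : A),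
    rho (act m a) = (TensorProduct.map LinearMap.id (LinearMap.mulRight k a)) (rho m)

namespace SweedlerComodule

variable {k A : Type*} [CommRing k] [Ring A] [Algebra k A]
variable {M N : Type*} [AddCommGroup M] [Module k M] [AddCommGroup N] [Module k N]

/-- The induced left `A`-action `a · m = m₍₀₎ a m₍₁₎` on a Sweedler comodule. -/
noncomputable def lAct (S : SweedlerComodule k A M) (a : A) : M →ₗ[k] M :=
  TensorProduct.lift S.act ∘ₗ TensorProduct.map (S.act.flip a) LinearMap.id ∘ₗ S.rho

section

variable (S : SweedlerComodule k A M)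

lemma lift_act_comp_counit : lift S.act ∘ₗ S.rho = LinearMap.id :=
  LinearMap.ext S.counit

lemma lift_act_comp_map_flip (a : A) :
    lift S.act ∘ₗ map (S.act.flip a) LinearMap.id =
      lift S.act ∘ₗ map LinearMap.id (LinearMap.mulLeft k a) := by
  ext x c
  simp [S.act_mul]

lemma lAct_eq_lift_act_comp_mulLeft (a : A) :
    S.lAct a = lift S.act ∘ₗ map LinearMap.id (LinearMap.mulLeft k a) ∘ₗ S.rho := by
  rw [lAct, ← LinearMap.comp_assoc, lift_act_comp_map_flip, LinearMap.comp_assoc]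

variable (k) in
noncomputable def mulMiddle (b : A) : A ⊗[k] A →ₗ[k] A :=
  LinearMap.mul' k A ∘ₗ map (LinearMap.mulRight k b) LinearMap.id

omit S in
@[simp]
lemma mulMiddle_tmul (b x y : A) : mulMiddle k b (x ⊗ₜ y) = x * b * y := rfl

omit S in
lemma mulMiddle_comp_mk_one (b : A) :
    mulMiddle k b ∘ₗ TensorProduct.mk k A A 1 = LinearMap.mulLeft k b := by
  ext c
  simp

lemma rho_comp_lift_act_comp_mulLeft (b : A) :
    S.rho ∘ₗ lift S.act ∘ₗ map LinearMap.id (LinearMap.mulLeft k b) =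
      map LinearMap.id (mulMiddle k b) ∘ₗ (TensorProduct.assoc k M A A).toLinearMap ∘ₗ
        map S.rho LinearMap.id := by
  refine TensorProduct.ext' fun x c => ?_
  simp only [LinearMap.coe_comp, Function.comp_apply, map_tmul, LinearMap.id_coe, id_eq,
    LinearMap.mulLeft_apply, lift.tmul, S.rho_act, LinearMap.mulRight_mul, LinearEquiv.coe_coe]
  induction S.rho x using TensorProduct.induction_on with
  | zero => simp
  | add t t' ht ht' => simp only [map_add, add_tmul, ht, ht']
  | tmul y u => simp [mul_assoc]

lemma rho_comp_lAct (b : A) :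
    S.rho ∘ₗ S.lAct b = map LinearMap.id (LinearMap.mulLeft k b) ∘ₗ S.rho := by
  ext m
  calc S.rho (S.lAct b m)
      = map LinearMap.id (mulMiddle k b)
          (TensorProduct.assoc k M A A (map S.rho LinearMap.id (S.rho m))) := by
        rw [lAct_eq_lift_act_comp_mulLeft]
        exact LinearMap.congr_fun (S.rho_comp_lift_act_comp_mulLeft b) (S.rho m)
    _ = map LinearMap.id (mulMiddle k b)
          (map LinearMap.id (TensorProduct.mk k A A 1) (S.rho m)) := by
        rw [S.coassoc]
    _ = map LinearMap.id (LinearMap.mulLeft k b) (S.rho m) := by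
        rw [← LinearMap.comp_apply, ← map_comp, LinearMap.id_comp, mulMiddle_comp_mk_one]

lemma lAct_one : S.lAct 1 = LinearMap.id := by
  rw [lAct_eq_lift_act_comp_mulLeft, LinearMap.mulLeft_one, map_id, LinearMap.id_comp,
    lift_act_comp_counit]

lemma lAct_mul (a b : A) : S.lAct (a * b) = S.lAct a ∘ₗ S.lAct b := by
  rw [lAct_eq_lift_act_comp_mulLeft, lAct_eq_lift_act_comp_mulLeft S a, LinearMap.comp_assoc,
    LinearMap.comp_assoc, rho_comp_lAct, LinearMap.mulLeft_mul]
  exact congrArg (fun φ => lift S.act ∘ₗ φ ∘ₗ S.rho) (LinearMap.lTensor_comp M _ _)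

lemma lAct_add (a b : A) : S.lAct (a + b) = S.lAct a + S.lAct b := by
  simp only [lAct, map_add, map_add_left, LinearMap.add_comp, LinearMap.comp_add]

lemma lAct_zero : S.lAct 0 = 0 := by
  simp only [lAct, map_zero, map_zero_left, LinearMap.zero_comp, LinearMap.comp_zero]

end

/-- `a · m := m₍₀₎ a m₍₁₎` defines a left `A`-module structure on `M`. -/
theorem lAct_isLeftModule (S : SweedlerComodule k A M) :
    (∀ m : M, S.lAct 1 m = m) ∧
    (∀ (a b : A) (m : M), S.lAct (a * b) m = S.lAct a (S.lAct b m)) ∧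
    (∀ (a b : A) (m : M), S.lAct (a + b) m = S.lAct a m + S.lAct b m) ∧
    (∀ m : M, S.lAct (0 : A) m = 0) ∧
    (∀ (a : A) (m m' : M), S.lAct a (m + m') = S.lAct a m + S.lAct a m') ∧
    (∀ a : A, S.lAct a (0 : M) = 0) ∧
    (∀ (a : A) (r : k) (m : M), S.lAct a (r • m) = r • S.lAct a m) :=
  ⟨fun m => by rw [lAct_one]; rfl,
   fun a b m => by rw [lAct_mul]; rfl,
   fun a b m => by rw [lAct_add]; rfl,
   fun m => by rw [lAct_zero]; rfl,
   fun a => map_add (S.lAct a),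
   fun a => map_zero (S.lAct a),
   fun a => map_smul (S.lAct a)⟩

end SweedlerComodule
end

section
/- Let A be a k-algebra and suppose E: A → Z(A) is a k-linear map into the center of A with E(1_A) = 1_A. For any right A⊗A-comodule M, the map μ^E_M: M ⊗ A → M defined by μ^E_M(m ⊗ a) = m_{[0]} E(m_{[1]}) a is left A-linear (with respect to the left A-action a · m = m_{[0]} a m_{[1]} on M and a · (m ⊗ b) = m ⊗ ab on M ⊗ A) and satisfies μ^E_M ∘ ρ = id_M. -/
/-!
Write `Q m = m₍₀₎ E(m₍₁₎)`, so that `μ^E(m ⊗ a) = Q(m) a`. Right `A`-linearity of the coaction and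
coassociativity give `ρ(Q m) = m₍₀₎ ⊗ E(m₍₁₎)` and `μ^E(ρ m) = m₍₀₎ E(1) m₍₁₎ = m`. Hence
`a · Q(m) = m₍₀₎ a E(m₍₁₎) = Q(m) a` because `E` takes central values, and since the left action
commutes with the right one, `a · (Q(m) b) = Q(m) a b = μ^E(m ⊗ ab)`.
-/

open TensorProduct

namespace SweedlerComodule

variable {k A : Type*} [CommRing k] [Ring A] [Algebra k A]
variable {M N : Type*} [AddCommGroup M] [Module k M] [AddCommGroup N] [Module k N]

theorem map_mul'_assoc_map_map {P Q : Type*} [AddCommGroup P] [Module k P]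
    [AddCommGroup Q] [Module k Q] (g : P →ₗ[k] Q ⊗[k] A) (f : A →ₗ[k] A) (t : P ⊗[k] A) :
    map LinearMap.id (LinearMap.mul' k A)
        (TensorProduct.assoc k Q A A (map g LinearMap.id (map LinearMap.id f t))) =
      map LinearMap.id (LinearMap.mul' k A ∘ₗ map LinearMap.id f)
        (TensorProduct.assoc k Q A A (map g LinearMap.id t)) := by
  have : map g LinearMap.id (map LinearMap.id f t) =
      map (map LinearMap.id LinearMap.id) f (map g LinearMap.id t) := by
    simp only [map_map, map_id, LinearMap.comp_id, LinearMap.id_comp]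
  rw [this, ← map_map_assoc, map_map, LinearMap.id_comp]

section

variable (S : SweedlerComodule k A M)

/-- `m ↦ m₍₀₎ f(m₍₁₎)`. -/
noncomputable def contract (f : A →ₗ[k] A) : M →ₗ[k] M :=
  lift S.act ∘ₗ map LinearMap.id f ∘ₗ S.rho

/-- The map `μ^f_M : m ⊗ a ↦ m₍₀₎ f(m₍₁₎) a`. -/
noncomputable def mu (f : A →ₗ[k] A) : M ⊗[k] A →ₗ[k] M :=
  lift (S.act ∘ₗ S.contract f)

theorem act_lift_act (t : M ⊗[k] A) (c : A) :
    S.act (lift S.act t) c = lift S.act (map LinearMap.id (LinearMap.mulRight k c) t) := by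
  induction t using TensorProduct.induction_on with
  | zero => simp
  | tmul m a => simp [S.act_mul]
  | add x y hx hy => simp [hx, hy]

theorem rho_lift_act (t : M ⊗[k] A) :
    S.rho (lift S.act t) =
      map LinearMap.id (LinearMap.mul' k A)
        (TensorProduct.assoc k M A A (map S.rho LinearMap.id t)) := by
  induction t using TensorProduct.induction_on with
  | zero => simp
  | tmul m a =>
    rw [lift.tmul, S.rho_act, map_tmul]
    induction S.rho m using TensorProduct.induction_on with
    | zero => simp
    | tmul n b => simp
    | add x y hx hy => simp [add_tmul, hx, hy]
  | add x y hx hy => simp [hx, hy]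

theorem map_coassoc (φ : A ⊗[k] A →ₗ[k] A) (m : M) :
    map LinearMap.id φ (TensorProduct.assoc k M A A (map S.rho LinearMap.id (S.rho m))) =
      map LinearMap.id (φ ∘ₗ TensorProduct.mk k A A 1) (S.rho m) := by
  rw [S.coassoc, map_map, LinearMap.id_comp]

theorem rho_contract (f : A →ₗ[k] A) (m : M) :
    S.rho (S.contract f m) = map LinearMap.id f (S.rho m) := by
  have hf : LinearMap.mul' k A ∘ₗ map LinearMap.id f ∘ₗ TensorProduct.mk k A A 1 = f := by
    ext; simp
  rw [contract, LinearMap.comp_apply, LinearMap.comp_apply, rho_lift_act,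
    map_mul'_assoc_map_map, map_coassoc, LinearMap.comp_assoc, hf]

theorem lift_act_map_contract (f : A →ₗ[k] A) (t : M ⊗[k] A) :
    lift S.act (map (S.contract f) LinearMap.id t) =
      lift S.act (map LinearMap.id (LinearMap.mul' k A ∘ₗ map f LinearMap.id)
        (TensorProduct.assoc k M A A (map S.rho LinearMap.id t))) := by
  induction t using TensorProduct.induction_on with
  | zero => simp
  | tmul m a =>
    simp only [contract, map_tmul, LinearMap.comp_apply, LinearMap.id_apply, lift.tmul]
    induction S.rho m using TensorProduct.induction_on with
    | zero => simp
    | tmul n b => simp [S.act_mul]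
    | add x y hx hy => simp only [map_add, add_tmul, LinearMap.add_apply, hx, hy]
  | add x y hx hy => simp only [map_add, hx, hy]

theorem mu_rho (f : A →ₗ[k] A) (hf : f 1 = 1) (m : M) : S.mu f (S.rho m) = m := by
  have hf' : LinearMap.mul' k A ∘ₗ map f LinearMap.id ∘ₗ TensorProduct.mk k A A 1 =
      LinearMap.id := by
    ext; simp [hf]
  rw [mu, ← LinearMap.compl₂_id (S.act ∘ₗ S.contract f), ← lift_comp_map, LinearMap.comp_apply,
    lift_act_map_contract, map_coassoc, LinearMap.comp_assoc, hf', map_id, LinearMap.id_apply,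
    S.counit]

theorem lAct_act (a b : A) (m : M) : S.lAct a (S.act m b) = S.act (S.lAct a m) b := by
  simp only [lAct, LinearMap.comp_apply, S.rho_act, act_lift_act]
  induction S.rho m using TensorProduct.induction_on with
  | zero => simp
  | tmul n c => simp
  | add x y hx hy => simp only [map_add, hx, hy]

theorem lAct_contract (f : A →ₗ[k] A) (hf : ∀ a, f a ∈ Set.center A) (a : A) (m : M) :
    S.lAct a (S.contract f m) = S.act (S.contract f m) a := by
  simp only [lAct, LinearMap.comp_apply, rho_contract]
  simp only [contract, LinearMap.comp_apply, act_lift_act]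
  induction S.rho m using TensorProduct.induction_on with
  | zero => simp
  | tmul n c => simp [S.act_mul, ((hf c).comm a).eq]
  | add x y hx hy => simp only [map_add, hx, hy]

theorem mu_mulLeft (f : A →ₗ[k] A) (hf : ∀ a, f a ∈ Set.center A) (a : A) (x : M ⊗[k] A) :
    S.mu f (map LinearMap.id (LinearMap.mulLeft k a) x) = S.lAct a (S.mu f x) := by
  induction x using TensorProduct.induction_on with
  | zero => simp
  | tmul m b =>
    simp only [mu, map_tmul, LinearMap.id_apply, LinearMap.mulLeft_apply, lift.tmul,
      LinearMap.comp_apply, lAct_act, S.lAct_contract f hf, S.act_mul]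
  | add x y hx hy => simp only [map_add, hx, hy]

end

/-- if `E : A → Z(A)` is `k`-linear and unitary, then
`μ^E_M(m ⊗ a) = m₍₀₎ E(m₍₁₎) a` is a left `A`-linear splitting of the coaction. -/
theorem muE_left_linear_splitting (S : SweedlerComodule k A M) (E : A →ₗ[k] A)
    (hEc : ∀ a : A, E a ∈ Set.center A) (hE1 : E 1 = 1) :
    ∀ muE : M ⊗[k] A →ₗ[k] M,
      muE = TensorProduct.lift (S.act ∘ₗ TensorProduct.lift S.act ∘ₗ
          TensorProduct.map LinearMap.id E ∘ₗ S.rho) →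
      (∀ m : M, muE (S.rho m) = m) ∧
      (∀ (a : A) (x : M ⊗[k] A),
        muE ((TensorProduct.map LinearMap.id (LinearMap.mulLeft k a)) x) =
          S.lAct a (muE x)) := by
  rintro _ rfl
  exact ⟨S.mu_rho E hE1, S.mu_mulLeft E hEc⟩

end SweedlerComodule
end
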